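/- Let n be an odd prime, a an integer with Legendre symbol (a/n) = −1, and consider the group T = Z/nZ ∪ {∞} with operation t1 * t2 = (t1·t2 + a)/(t1 + t2) (identity ∞). Then for every t in Z/nZ, (n+1)·t = ∞ in T, and consequently (n−1)·t + 2·t = ∞. -/

import Mathlib

/-!
Adjoin a square root `s` of the non-residue `a` to `ZMod n`. The Cayley transform
`t ↦ (t + s) / (t - s)`, `∞ ↦ 1`, turns `Tmul a` into multiplication and sends only `∞` to `1`.
The Frobenius `x ↦ xⁿ` fixes `ZMod n` and, by Euler's criterion `a ^ (n / 2) = -1`, sends `s`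
to `-s`; hence it inverts every Cayley transform `c`, i.e. `c ^ (n + 1) = 1`.
-/

/-- The operation on `T = Z/nZ ∪ {∞}` (with `∞ = none`) given by
`t₁ * t₂ = (t₁t₂ + a)/(t₁ + t₂)` when `t₁ + t₂ ≠ 0`, `∞` when `t₁ + t₂ = 0`,
and with `∞` as identity. -/
def Tmul {n : ℕ} [Fact n.Prime] (a : ZMod n) :
    Option (ZMod n) → Option (ZMod n) → Option (ZMod n)
  | none, t => t
  | some t, none => some t
  | some t1, some t2 => if t1 + t2 = 0 then none else some ((t1 * t2 + a) / (t1 + t2))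

/-- `Tpow a t k` is the `k`-fold product `t * t * ⋯ * t` in `(T, Tmul a)`,
with `Tpow a t 0 = ∞` the identity. -/
def Tpow {n : ℕ} [Fact n.Prime] (a : ZMod n) (t : Option (ZMod n)) : ℕ → Option (ZMod n)
  | 0 => none
  | k + 1 => Tmul a t (Tpow a t k)

section Cayley

variable {F K : Type*} [Field F] [Field K] [Algebra F K]

variable (F) in
def cayley (s : K) : Option F → K
  | none => 1
  | some u => (algebraMap F K u + s) / (algebraMap F K u - s)

variable {a : F} {s : K}

theorem algebraMap_sub_ne_zero (hs : s ^ 2 = algebraMap F K a) (ha : ¬IsSquare a) (u : F) :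
    algebraMap F K u - s ≠ 0 := by
  intro h
  refine ha ⟨u, (algebraMap F K).injective ?_⟩
  rw [map_mul, ← hs, sub_eq_zero.mp h, sq]

theorem algebraMap_add_ne_zero (hs : s ^ 2 = algebraMap F K a) (ha : ¬IsSquare a) (u : F) :
    algebraMap F K u + s ≠ 0 := by
  simpa [sub_neg_eq_add] using algebraMap_sub_ne_zero (s := -s) (by rwa [neg_sq]) ha u

theorem cayley_eq_one_iff (hs : s ^ 2 = algebraMap F K a) (ha : ¬IsSquare a) (h2 : (2 : F) ≠ 0)
    {x : Option F} : cayley F s x = 1 ↔ x = none := by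
  refine ⟨fun h => ?_, fun h => h ▸ rfl⟩
  obtain _ | u := x
  · rfl
  have hs0 : s ≠ 0 := by
    rintro rfl
    exact ha ⟨0, (algebraMap F K).injective (by simpa [eq_comm] using hs)⟩
  have h2K : (2 : K) ≠ 0 := map_ofNat (algebraMap F K) 2 ▸ (map_ne_zero _).mpr h2
  rw [cayley, div_eq_one_iff_eq (algebraMap_sub_ne_zero hs ha u)] at h
  exact absurd (by linear_combination h : (2 : K) * s = 0) (mul_ne_zero h2K hs0)

theorem cayley_some_mul_some_neg (hs : s ^ 2 = algebraMap F K a) (ha : ¬IsSquare a) (u : F) :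
    cayley F s (some u) * cayley F s (some (-u)) = 1 := by
  have hsub := algebraMap_sub_ne_zero hs ha u
  have hadd := algebraMap_add_ne_zero hs ha u
  have hneg : -algebraMap F K u - s ≠ 0 := by
    rw [← neg_add']; exact neg_ne_zero.mpr hadd
  rw [cayley, cayley, map_neg, div_mul_div_comm, div_eq_one_iff_eq (mul_ne_zero hsub hneg)]
  ring

theorem cayley_some_mul_some (hs : s ^ 2 = algebraMap F K a) (ha : ¬IsSquare a) {u v : F}
    (huv : u + v ≠ 0) :
    cayley F s (some ((u * v + a) / (u + v))) = cayley F s (some u) * cayley F s (some v) := by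
  have huvK : algebraMap F K u + algebraMap F K v ≠ 0 := by
    rw [← map_add]; exact (map_ne_zero _).mpr huv
  have hsu := algebraMap_sub_ne_zero hs ha u
  have hsv := algebraMap_sub_ne_zero hs ha v
  have hden : algebraMap F K u * algebraMap F K v + algebraMap F K a
      - (algebraMap F K u + algebraMap F K v) * s ≠ 0 := by
    intro h
    exact mul_ne_zero hsu hsv (by linear_combination h + hs)
  simp only [cayley, map_div₀, map_add, map_mul]
  rw [div_add' _ _ _ huvK, div_sub' huvK, div_div_div_cancel_right₀ huvK, div_mul_div_comm,
    div_eq_div_iff hden (mul_ne_zero hsu hsv)]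
  linear_combination (2 * s * (algebraMap F K u + algebraMap F K v)) * hs

theorem map_cayley_mul_cayley (hs : s ^ 2 = algebraMap F K a) (ha : ¬IsSquare a)
    (σ : K →ₐ[F] K) (hσ : σ s = -s) (u : F) :
    σ (cayley F s (some u)) * cayley F s (some u) = 1 := by
  have hsub := algebraMap_sub_ne_zero hs ha u
  have hadd := algebraMap_add_ne_zero hs ha u
  rw [cayley, map_div₀, map_add, map_sub, σ.commutes, hσ, ← sub_eq_add_neg, sub_neg_eq_add,
    div_mul_div_comm, div_eq_one_iff_eq (mul_ne_zero hadd hsub), mul_comm]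

theorem pow_eq_neg_of_sq_eq {n : ℕ} (hn : Odd n) (hs : s ^ 2 = algebraMap F K a)
    (heuler : a ^ (n / 2) = -1) : s ^ n = -s := by
  calc s ^ n = (s ^ 2) ^ (n / 2) * s := by
        rw [← pow_mul, ← pow_succ, Nat.two_mul_div_two_add_one_of_odd hn]
    _ = -s := by rw [hs, ← map_pow, heuler, map_neg, map_one, neg_one_mul]

end Cayley

section ZMod

variable {p : ℕ} [Fact p.Prime] {K : Type*} [Field K] [Algebra (ZMod p) K] {a : ZMod p} {s : K}

theorem cayley_Tmul (hs : s ^ 2 = algebraMap (ZMod p) K a) (ha : ¬IsSquare a)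
    (x y : Option (ZMod p)) :
    cayley (ZMod p) s (Tmul a x y) = cayley (ZMod p) s x * cayley (ZMod p) s y := by
  rcases x with _ | u <;> rcases y with _ | v
  · exact (mul_one _).symm
  · exact (one_mul _).symm
  · exact (mul_one _).symm
  by_cases huv : u + v = 0
  · rw [Tmul, if_pos huv, eq_neg_of_add_eq_zero_right huv,
      cayley_some_mul_some_neg hs ha, cayley]
  · rw [Tmul, if_neg huv, cayley_some_mul_some hs ha huv]

theorem cayley_Tpow (hs : s ^ 2 = algebraMap (ZMod p) K a) (ha : ¬IsSquare a)
    (x : Option (ZMod p)) (k : ℕ) :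
    cayley (ZMod p) s (Tpow a x k) = cayley (ZMod p) s x ^ k := by
  induction k with
  | zero => rw [pow_zero]; rfl
  | succ k ih => rw [Tpow, cayley_Tmul hs ha, ih, pow_succ']

theorem cayley_pow_add_one (hp : Odd p) (hs : s ^ 2 = algebraMap (ZMod p) K a)
    (ha : ¬IsSquare a) (u : ZMod p) : cayley (ZMod p) s (some u) ^ (p + 1) = 1 := by
  have ha0 : a ≠ 0 := by rintro rfl; exact ha .zero
  have heuler : a ^ (p / 2) = -1 :=
    (ZMod.pow_div_two_eq_neg_one_or_one p ha0).resolve_left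
      fun h => ha ((ZMod.euler_criterion p ha0).mpr h)
  have hfrob : FiniteField.frobeniusAlgHom (ZMod p) K s = -s := by
    rw [FiniteField.coe_frobeniusAlgHom, ZMod.card]
    exact pow_eq_neg_of_sq_eq hp hs heuler
  have h := map_cayley_mul_cayley hs ha _ hfrob u
  rwa [FiniteField.coe_frobeniusAlgHom, ZMod.card, ← pow_succ] at h

end ZMod

/-- Let `n` be an odd prime and `a` an integer with Legendre symbol `(a/n) = -1`. In the
group `T = Z/nZ ∪ {∞}` with operation `Tmul a`, every `t ∈ Z/nZ` satisfies
`(n+1)·t = ∞`, and consequently `(n-1)·t + 2·t = ∞`. -/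
theorem Tpow_n_add_one (n : ℕ) [Fact n.Prime] (hn : Odd n)
    (a : ℤ) (hleg : legendreSym n a = -1) (t : ZMod n) :
    Tpow (a : ZMod n) (some t) (n + 1) = none ∧
    Tmul (a : ZMod n) (Tpow (a : ZMod n) (some t) (n - 1))
      (Tpow (a : ZMod n) (some t) 2) = none := by
  have ha : ¬IsSquare (a : ZMod n) := (legendreSym.eq_neg_one_iff n).mp hleg
  have h2 : (2 : ZMod n) ≠ 0 := Ring.two_ne_zero <| by
    rw [ZMod.ringChar_zmod_n]; rintro rfl; exact Nat.not_odd_iff_even.mpr even_two hn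
  obtain ⟨s, hs⟩ := IsAlgClosed.exists_pow_nat_eq
    (algebraMap (ZMod n) (AlgebraicClosure (ZMod n)) a) two_pos
  have hc := cayley_pow_add_one hn hs ha t
  constructor
  · rw [← cayley_eq_one_iff hs ha h2, cayley_Tpow hs ha, hc]
  · rw [← cayley_eq_one_iff hs ha h2, cayley_Tmul hs ha, cayley_Tpow hs ha, cayley_Tpow hs ha,
      ← pow_add, show n - 1 + 2 = n + 1 by have := hn.pos; omega, hc]
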